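/- arXiv:2511.02033 — 3 statements merged into one kernel-verified Lean document; each statement's English description precedes it below -/
import Mathlib

section
/- Let τ > 0 and let ξ be a real random variable with E ξ = 0 and Var ξ = σ² whose distribution F belongs to the class A₁(τ). Then for all real t with |t|τ ≤ 1, the characteristic functions satisfy |F̂(t) − Φ̂(t)| ≤ (τ/6)·σ²·|t|³·exp(−σ²t²/3), where F̂(t) = E exp(itξ) and Φ̂(t) = exp(−σ²t²/2) is the characteristic function of the Gaussian law with mean 0 and variance σ². -/
open MeasureTheory ProbabilityTheory

noncomputable section

/-- `φ` is the cumulant generating function (analytic logarithm of the Laplace transform,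
normalized by `φ 0 = 0`) of `μ` on the disc `{z : ‖z‖ * τ < 1}`, with third derivative
bounded by `τ · Var μ`.  This is the defining property of the class `A₁(τ)`. -/
def IsCGF (φ : ℂ → ℂ) (τ : ℝ) (μ : Measure ℝ) : Prop :=
  φ 0 = 0 ∧ ∀ z : ℂ, ‖z‖ * τ < 1 →
    Integrable (fun x : ℝ => Complex.exp (z * x)) μ ∧
    Complex.exp (φ z) = ∫ x : ℝ, Complex.exp (z * x) ∂μ ∧
    AnalyticAt ℂ φ z ∧
    ‖iteratedDeriv 3 φ z‖ ≤ τ * variance id μ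

/-- The class `A₁(τ)` of distributions on `ℝ`. -/
def MemA1 (τ : ℝ) (μ : Measure ℝ) : Prop := ∃ φ : ℂ → ℂ, IsCGF φ τ μ

/-- `π` is a coupling of `F` and `G`. -/
def IsCoupling (π : Measure (ℝ × ℝ)) (F G : Measure ℝ) : Prop :=
  π.map Prod.fst = F ∧ π.map Prod.snd = G

open Complex Metric Set Filter Topology

/-!
On the disc `‖z‖ τ < 1` the cumulant function `φ` of `F` is read off from the complex moment
generating function `exp ∘ φ`: `φ 0 = 0`, `φ' 0 = E ξ = 0` and `φ'' 0 = σ²`. Taylor's formula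
with `‖φ'''‖ ≤ τ σ²` then gives `φ (i t) = -σ² t² / 2 + w` with
`‖w‖ ≤ τ σ² |t|³ / 6 ≤ σ² t² / 6`, whence
`‖F̂ t - Φ̂ t‖ = e^{-σ² t²/2} ‖e^w - 1‖ ≤ ‖w‖ e^{-σ² t²/2 + ‖w‖} ≤ τ σ² |t|³ e^{-σ² t²/3} / 6`.
The boundary `|t| τ = 1`, where `φ (i t)` is not available, follows by continuity of both sides.
-/

lemma norm_le_of_norm_deriv_le_pow {E : Type*} [NormedAddCommGroup E] [NormedSpace ℝ E]
    {f f' : ℝ → E} {b C : ℝ} {n : ℕ} (h0 : f 0 = 0) (hf : ∀ s ∈ Icc 0 b, HasDerivAt f (f' s) s)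
    (hf' : ∀ s ∈ Icc 0 b, ‖f' s‖ ≤ C * s ^ n / n.factorial) :
    ∀ s ∈ Icc 0 b, ‖f s‖ ≤ C * s ^ (n + 1) / (n + 1).factorial := by
  refine image_norm_le_of_norm_deriv_right_le_deriv_boundary
    (fun s hs => (hf s hs).continuousAt.continuousWithinAt)
    (fun s hs => (hf s (Ico_subset_Icc_self hs)).hasDerivWithinAt) (by simp [h0])
    (fun s => ?_) (fun s hs => hf' s (Ico_subset_Icc_self hs))
  refine (((hasDerivAt_pow (n + 1) s).const_mul C).div_const _).congr_deriv ?_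
  rw [Nat.factorial_succ]
  push_cast
  field_simp

lemma HasDerivAt.comp_ofReal_mul {H : ℂ → ℂ} {H' z : ℂ} {s : ℝ} (hH : HasDerivAt H H' (s * z)) :
    HasDerivAt (fun u : ℝ => H (u * z)) (H' * z) s := by
  simpa using (hH.comp (s : ℂ) ((hasDerivAt_id (s : ℂ)).mul_const z)).comp_ofReal

lemma norm_le_of_norm_third_deriv_le {h h₁ h₂ h₃ : ℂ → ℂ} {r C : ℝ}
    (hd₀ : ∀ w ∈ ball (0 : ℂ) r, HasDerivAt h (h₁ w) w)
    (hd₁ : ∀ w ∈ ball (0 : ℂ) r, HasDerivAt h₁ (h₂ w) w)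
    (hd₂ : ∀ w ∈ ball (0 : ℂ) r, HasDerivAt h₂ (h₃ w) w)
    (h0 : h 0 = 0) (h₁0 : h₁ 0 = 0) (h₂0 : h₂ 0 = 0) (hC : ∀ w ∈ ball (0 : ℂ) r, ‖h₃ w‖ ≤ C)
    {z : ℂ} (hz : z ∈ ball (0 : ℂ) r) :
    ‖h z‖ ≤ C * ‖z‖ ^ 3 / 6 := by
  have hseg : ∀ s ∈ Icc (0 : ℝ) 1, (s * z : ℂ) ∈ ball (0 : ℂ) r := fun s hs => by
    rw [mem_ball_zero_iff] at hz ⊢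
    rw [norm_mul, norm_real, Real.norm_of_nonneg hs.1]
    exact (mul_le_of_le_one_left (norm_nonneg z) hs.2).trans_lt hz
  -- `u ↦ z ^ k * hₖ (u z)` is the `k`-th derivative of `u ↦ h (u z)`; integrate three times.
  have hstep : ∀ {H H' : ℂ → ℂ} (k : ℕ), (∀ w ∈ ball (0 : ℂ) r, HasDerivAt H (H' w) w) →
      ∀ s ∈ Icc (0 : ℝ) 1,
        HasDerivAt (fun u : ℝ => z ^ k * H (u * z)) (z ^ (k + 1) * H' (s * z)) s :=
    fun k hH s hs => by
      refine (((hH _ (hseg s hs)).comp_ofReal_mul).const_mul (z ^ k)).congr_deriv ?_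
      ring
  have b₃ : ∀ s ∈ Icc (0 : ℝ) 1, ‖z ^ 3 * h₃ (s * z)‖ ≤ C * ‖z‖ ^ 3 * s ^ 0 / (0).factorial :=
    fun s hs => by
      rw [norm_mul, norm_pow]
      simpa [mul_comm] using
        mul_le_mul_of_nonneg_left (hC _ (hseg s hs)) (pow_nonneg (norm_nonneg z) 3)
  have b₂ := norm_le_of_norm_deriv_le_pow (by simp [h₂0]) (hstep 2 hd₂) b₃
  have b₁ := norm_le_of_norm_deriv_le_pow (by simp [h₁0]) (hstep 1 hd₁) b₂
  have b₀ := norm_le_of_norm_deriv_le_pow (f := fun u : ℝ => z ^ 0 * h (u * z)) (by simp [h0])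
    (hstep 0 hd₀) b₁ 1 ⟨zero_le_one, le_rfl⟩
  simpa [Nat.factorial] using b₀

lemma norm_cexp_add_sub_cexp_le (a : ℝ) (w : ℂ) :
    ‖cexp (a + w) - cexp a‖ ≤ ‖w‖ * Real.exp (a + ‖w‖) := by
  have h := norm_exp_sub_sum_le_norm_mul_exp w 1
  simp only [Finset.range_one, Finset.sum_singleton, pow_zero, Nat.factorial_zero, Nat.cast_one,
    div_one, pow_one] at h
  calc ‖cexp (a + w) - cexp a‖ = Real.exp a * ‖cexp w - 1‖ := by
        rw [exp_add, ← mul_sub_one, norm_mul, ← ofReal_exp, norm_real,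
          Real.norm_of_nonneg (Real.exp_pos a).le]
    _ ≤ Real.exp a * (‖w‖ * Real.exp ‖w‖) := by gcongr
    _ = ‖w‖ * Real.exp (a + ‖w‖) := by rw [Real.exp_add]; ring

lemma deriv_deriv_cexp_comp {φ : ℂ → ℂ} {z : ℂ} (hφ : AnalyticAt ℂ φ z) :
    deriv (deriv fun w => cexp (φ w)) z = cexp (φ z) * (deriv φ z ^ 2 + deriv (deriv φ) z) := by
  have h : deriv (fun w => cexp (φ w)) =ᶠ[𝓝 z] fun w => cexp (φ w) * deriv φ w := by
    filter_upwards [hφ.eventually_analyticAt] with w hw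
    exact deriv_cexp hw.differentiableAt
  have hd : HasDerivAt (fun w => cexp (φ w) * deriv φ w)
      (cexp (φ z) * deriv φ z * deriv φ z + cexp (φ z) * deriv (deriv φ) z) z :=
    hφ.differentiableAt.hasDerivAt.cexp.mul hφ.deriv.differentiableAt.hasDerivAt
  rw [h.deriv_eq, hd.deriv]
  ring

lemma le_on_closedBall_of_le_on_ball {E : Type*} [NormedAddCommGroup E] [NormedSpace ℝ E]
    {f g : E → ℝ} (hf : Continuous f) (hg : Continuous g) {c : E} {r : ℝ} (hr : r ≠ 0)
    (h : ∀ x ∈ ball c r, f x ≤ g x) : ∀ x ∈ closedBall c r, f x ≤ g x := by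
  rw [← closure_ball c hr]
  exact closure_minimal h (isClosed_le hf hg)

lemma mem_ball_zero_inv_iff {E : Type*} [SeminormedAddCommGroup E] {τ : ℝ} (hτ : 0 < τ) {z : E} :
    z ∈ ball (0 : E) τ⁻¹ ↔ ‖z‖ * τ < 1 := by
  rw [mem_ball_zero_iff, ← one_div, lt_div_iff₀ hτ]

namespace IsCGF

variable {φ : ℂ → ℂ} {τ : ℝ} {μ : Measure ℝ}

lemma analyticOnNhd (hτ : 0 < τ) (hφ : IsCGF φ τ μ) : AnalyticOnNhd ℂ φ (ball 0 τ⁻¹) :=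
  fun z hz => ((hφ.2 z ((mem_ball_zero_inv_iff hτ).1 hz)).2.2.1)

lemma exp_eventuallyEq_complexMGF (hτ : 0 < τ) (hφ : IsCGF φ τ μ) :
    (fun z => cexp (φ z)) =ᶠ[𝓝 0] complexMGF id μ := by
  filter_upwards [ball_mem_nhds (0 : ℂ) (inv_pos.2 hτ)] with z hz
  exact (hφ.2 z ((mem_ball_zero_inv_iff hτ).1 hz)).2.1

lemma zero_mem_interior_integrableExpSet (hτ : 0 < τ) (hφ : IsCGF φ τ μ) :
    (0 : ℝ) ∈ interior (integrableExpSet id μ) := by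
  refine mem_interior.2 ⟨ball 0 τ⁻¹, fun c hc => ?_, isOpen_ball, mem_ball_self (inv_pos.2 hτ)⟩
  have hc' : ‖(c : ℂ)‖ * τ < 1 := by rw [norm_real]; exact (mem_ball_zero_inv_iff hτ).1 hc
  simpa [integrableExpSet, ← ofReal_mul, norm_exp] using (hφ.2 c hc').1.norm

lemma deriv_zero (hτ : 0 < τ) (hφ : IsCGF φ τ μ) : deriv φ 0 = ((∫ x, x ∂μ : ℝ) : ℂ) := by
  have h := iteratedDeriv_complexMGF (z := 0)
    (by simpa using hφ.zero_mem_interior_integrableExpSet hτ) 1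
  rw [iteratedDeriv_one, ← (hφ.exp_eventuallyEq_complexMGF hτ).deriv_eq,
    deriv_cexp (hφ.analyticOnNhd hτ 0 (mem_ball_self (inv_pos.2 hτ))).differentiableAt] at h
  simp only [hφ.1, exp_zero, one_mul, id_eq, pow_one, zero_mul, mul_one] at h
  rw [h, integral_complex_ofReal]

lemma deriv_deriv_zero [IsProbabilityMeasure μ] (hτ : 0 < τ) (hφ : IsCGF φ τ μ) :
    deriv (deriv φ) 0 = (variance id μ : ℂ) := by
  have h := iteratedDeriv_complexMGF (z := 0)
    (by simpa using hφ.zero_mem_interior_integrableExpSet hτ) 2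
  rw [iteratedDeriv_succ, iteratedDeriv_one,
    ← (hφ.exp_eventuallyEq_complexMGF hτ).deriv.deriv_eq,
    deriv_deriv_cexp_comp (hφ.analyticOnNhd hτ 0 (mem_ball_self (inv_pos.2 hτ))),
    hφ.deriv_zero hτ, hφ.1] at h
  rw [variance_eq_sub (memLp_of_mem_interior_integrableExpSet
    (hφ.zero_mem_interior_integrableExpSet hτ) 2)]
  simp only [exp_zero, one_mul, id_eq, zero_mul, mul_one] at h
  have hsq : ∫ x, (x : ℂ) ^ 2 ∂μ = ((∫ x, x ^ 2 ∂μ : ℝ) : ℂ) := by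
    simp_rw [← ofReal_pow]
    exact integral_complex_ofReal
  push_cast [Pi.pow_apply, id]
  linear_combination h.trans hsq

lemma norm_sub_half_variance_mul_sq_le [IsProbabilityMeasure μ] (hτ : 0 < τ) (hφ : IsCGF φ τ μ)
    (hmean : ∫ x, x ∂μ = 0) {z : ℂ} (hz : ‖z‖ * τ < 1) :
    ‖φ z - variance id μ / 2 * z ^ 2‖ ≤ τ * variance id μ * ‖z‖ ^ 3 / 6 := by
  set v : ℂ := (variance id μ : ℂ)
  have hA := hφ.analyticOnNhd hτ
  refine norm_le_of_norm_third_deriv_le (h := fun w => φ w - v / 2 * w ^ 2)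
    (h₁ := fun w => deriv φ w - v * w) (h₂ := fun w => deriv (deriv φ) w - v)
    (h₃ := deriv (deriv (deriv φ)))
    (fun w hw => ?_) (fun w hw => ?_) (fun w hw => ?_) ?_ ?_ ?_ (fun w hw => ?_)
    ((mem_ball_zero_inv_iff hτ).2 hz)
  · exact (hA w hw).differentiableAt.hasDerivAt.sub
      (((hasDerivAt_pow 2 w).const_mul (v / 2)).congr_deriv (by ring))
  · exact (hA.deriv w hw).differentiableAt.hasDerivAt.sub
      (((hasDerivAt_id w).const_mul v).congr_deriv (by simp))
  · exact (hA.deriv.deriv w hw).differentiableAt.hasDerivAt.sub_const v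
  · simp [hφ.1]
  · simp [hφ.deriv_zero hτ, hmean]
  · simp [v, hφ.deriv_deriv_zero hτ]
  · have h := (hφ.2 w ((mem_ball_zero_inv_iff hτ).1 hw)).2.2.2
    simpa [iteratedDeriv_succ] using h

lemma norm_charFun_sub_gaussian_le [IsProbabilityMeasure μ] (hτ : 0 < τ) (hφ : IsCGF φ τ μ)
    (hmean : ∫ x, x ∂μ = 0) {t : ℝ} (ht : |t| * τ < 1) :
    ‖charFun μ t - (Real.exp (-(variance id μ * t ^ 2) / 2) : ℂ)‖ ≤
      τ / 6 * variance id μ * |t| ^ 3 * Real.exp (-(variance id μ * t ^ 2) / 3) := by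
  set v := variance id μ
  have hv : 0 ≤ v := variance_nonneg _ _
  have hz : ‖(t : ℂ) * I‖ * τ < 1 := by simpa using ht
  set w := φ (t * I) + v * t ^ 2 / 2
  have hw : ‖w‖ ≤ τ * v * |t| ^ 3 / 6 := by
    have h := hφ.norm_sub_half_variance_mul_sq_le hτ hmean hz
    rw [mul_pow, I_sq] at h
    simpa [w, sub_eq_add_neg, ← mul_assoc, div_mul_eq_mul_div] using h
  have hw' : τ * v * |t| ^ 3 / 6 ≤ v * t ^ 2 / 6 := by
    have h : τ * v * |t| ^ 3 = (|t| * τ) * (v * t ^ 2) := by rw [← sq_abs t]; ring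
    rw [h]
    exact div_le_div_of_nonneg_right (mul_le_of_le_one_left (by positivity) ht.le) (by norm_num)
  have hchar : charFun μ t = cexp (((-(v * t ^ 2) / 2 : ℝ) : ℂ) + w) := by
    have hM : cexp (φ (t * I)) = complexMGF id μ (t * I) := (hφ.2 _ hz).2.1
    rw [← complexMGF_id_mul_I, ← hM]
    congr 1
    push_cast
    ring
  calc ‖charFun μ t - (Real.exp (-(v * t ^ 2) / 2) : ℂ)‖
      ≤ ‖w‖ * Real.exp (-(v * t ^ 2) / 2 + ‖w‖) := by
        rw [hchar, ofReal_exp]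
        exact norm_cexp_add_sub_cexp_le _ w
    _ ≤ τ * v * |t| ^ 3 / 6 * Real.exp (-(v * t ^ 2) / 2 + v * t ^ 2 / 6) := by
        gcongr
        exact hw.trans hw'
    _ = τ / 6 * v * |t| ^ 3 * Real.exp (-(v * t ^ 2) / 3) := by ring_nf

end IsCGF

/-- Characteristic function estimate for the class `A₁(τ)`: for `|t| τ ≤ 1`,
`|F̂(t) - Φ̂(t)| ≤ (τ/6) σ² |t|³ exp(-σ² t²/3)`. -/
theorem charfun_estimate_A1
    (τ σ : ℝ) (hτ : 0 < τ) (F : Measure ℝ) [IsProbabilityMeasure F]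
    (hmean : (∫ x : ℝ, x ∂F) = 0) (hvar : variance id F = σ ^ 2) (hA : MemA1 τ F)
    (t : ℝ) (ht : |t| * τ ≤ 1) :
    ‖(∫ x : ℝ, Complex.exp ((t : ℂ) * (x : ℂ) * Complex.I) ∂F) -
        (Real.exp (-(σ ^ 2 * t ^ 2) / 2) : ℂ)‖ ≤
      τ / 6 * σ ^ 2 * |t| ^ 3 * Real.exp (-(σ ^ 2 * t ^ 2) / 3) := by
  obtain ⟨φ, hφ⟩ := hA
  rw [← charFun_apply_real, ← hvar]
  refine le_on_closedBall_of_le_on_ball ?_ ?_ (inv_ne_zero hτ.ne')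
    (fun s hs => hφ.norm_charFun_sub_gaussian_le hτ hmean (t := s)
      (by simpa using (mem_ball_zero_inv_iff hτ).1 hs)) t ?_
  · fun_prop
  · fun_prop
  rwa [mem_closedBall_zero_iff, Real.norm_eq_abs, ← one_div, le_div_iff₀ hτ]
end
end

section
/- Let τ > 0 and let ξ be a real random variable with E ξ = 0 and Var ξ = σ² whose distribution belongs to the class A₁(τ). Then for every x ≥ 0, P(ξ ≥ x) ≤ max{ exp(−x²/(4σ²)), exp(−x/(4τ)) }. -/
open MeasureTheory ProbabilityTheory

noncomputable section

/-!
For real `t` with `|t| τ < 1` we have `|exp φ(t)| = E exp(tξ)`, so `Re φ` agrees with the cumulant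
generating function `K` of `ξ` on `(-1/τ, 1/τ)` (the imaginary part of `φ` is not controlled), and
there `|K'''| = |Re φ'''| ≤ τσ²`. As `K(0) = K'(0) = 0` and `K''(0) = σ²`, Taylor's theorem gives
`K(t) ≤ (σ² + τσ²t) t²/2` for `0 ≤ t < 1/τ`. The Chernoff bound `P(ξ ≥ x) ≤ exp(-tx + K(t))` at
`t = x/(2σ²)` when `τx ≤ σ²`, and at `t = 1/(2τ)` otherwise, yields the two terms of the maximum.
-/

open Real Set Filter Topology

theorem iteratedDeriv_re_comp_ofReal {f : ℂ → ℂ} {s : Set ℂ} (hs : IsOpen s)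
    (hf : AnalyticOnNhd ℂ f s) (n : ℕ) :
    EqOn (iteratedDeriv n fun t : ℝ ↦ (f t).re) (fun t ↦ (iteratedDeriv n f t).re)
      (Complex.ofReal ⁻¹' s) := by
  induction n with
  | zero => intro x _; simp
  | succ n ih =>
    intro x hx
    have hopen : IsOpen (Complex.ofReal ⁻¹' s) := hs.preimage Complex.continuous_ofReal
    have hdiff : DifferentiableAt ℂ (iteratedDeriv n f) x := by
      rw [iteratedDeriv_eq_iterate]
      exact (hf.iterated_deriv n x hx).differentiableAt
    rw [iteratedDeriv_succ, iteratedDeriv_succ,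
      (ih.eventuallyEq_of_mem (hopen.mem_nhds hx)).deriv_eq]
    exact hdiff.hasDerivAt.real_of_complex.deriv

namespace ProbabilityTheory

variable {Ω : Type*} {m : MeasurableSpace Ω} {X : Ω → ℝ} {μ : Measure Ω}

lemma iteratedDeriv_two_cgf_zero [IsProbabilityMeasure μ] (hX : AEMeasurable X μ)
    (h : 0 ∈ interior (integrableExpSet X μ)) :
    iteratedDeriv 2 (cgf X μ) 0 = Var[X; μ] := by
  simp [iteratedDeriv_two_cgf_eq_integral h, deriv_cgf_zero h, variance_eq_integral hX]

lemma cgf_le_of_abs_iteratedDeriv_three_le [IsProbabilityMeasure μ] (hX : AEMeasurable X μ)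
    (hc : μ[X] = 0) {t M : ℝ} (ht : 0 ≤ t) (hs : Icc 0 t ⊆ interior (integrableExpSet X μ))
    (hM : ∀ u ∈ Icc 0 t, |iteratedDeriv 3 (cgf X μ) u| ≤ M) :
    cgf X μ t ≤ (Var[X; μ] + M * t) * t ^ 2 / 2 := by
  rcases ht.eq_or_lt with rfl | ht
  · simp
  obtain ⟨u, hu, hcgf⟩ := exists_cgf_eq_iteratedDeriv_two_cgf_mul ht hc hs
  have hderiv : ∀ v ∈ Icc 0 t, HasDerivWithinAt (iteratedDeriv 2 (cgf X μ))
      (iteratedDeriv 3 (cgf X μ) v) (Icc 0 t) v := by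
    intro v hv
    have hd := (analyticOnNhd_cgf.iterated_deriv 2 v (hs hv)).differentiableAt.hasDerivAt
    rw [← iteratedDeriv_eq_iterate, ← iteratedDeriv_succ] at hd
    exact hd.hasDerivWithinAt
  have hlip := norm_image_sub_le_of_norm_deriv_le_segment' hderiv
    (fun v hv ↦ hM v (Ico_subset_Icc_self hv)) u (Ioo_subset_Icc_self hu)
  rw [iteratedDeriv_two_cgf_zero hX (hs ⟨le_rfl, ht.le⟩), Real.norm_eq_abs] at hlip
  have hM₀ : 0 ≤ M := (abs_nonneg _).trans (hM 0 ⟨le_rfl, ht.le⟩)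
  have hsecond : iteratedDeriv 2 (cgf X μ) u ≤ Var[X; μ] + M * t := by
    nlinarith [le_abs_self (iteratedDeriv 2 (cgf X μ) u - Var[X; μ]), hu.2]
  rw [hcgf]
  gcongr

end ProbabilityTheory

namespace IsCGF

variable {φ : ℂ → ℂ} {τ : ℝ} {μ : Measure ℝ}

lemma integrable_exp_mul (h : IsCGF φ τ μ) {t : ℝ} (ht : |t| * τ < 1) :
    Integrable (fun x ↦ rexp (t * x)) μ :=
  ((h.2 t (by simpa using ht)).1.norm).congr <| .of_forall fun x ↦ by
    simp [Complex.norm_exp, ← Complex.ofReal_mul]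

lemma subset_interior_integrableExpSet (h : IsCGF φ τ μ) :
    {t : ℝ | |t| * τ < 1} ⊆ interior (integrableExpSet id μ) :=
  interior_maximal (fun _ ht ↦ h.integrable_exp_mul ht)
    (isOpen_lt (continuous_abs.mul continuous_const) continuous_const)

lemma re_eq_cgf (h : IsCGF φ τ μ) {t : ℝ} (ht : |t| * τ < 1) : (φ t).re = cgf id μ t := by
  have hexp : Complex.exp (φ t) = mgf id μ t := by
    rw [(h.2 t (by simpa using ht)).2.1, ← complexMGF_ofReal]
    rfl
  have hnorm := congrArg norm hexp
  rw [Complex.norm_exp, Complex.norm_real, Real.norm_of_nonneg mgf_nonneg] at hnorm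
  rw [cgf, ← hnorm, Real.log_exp]

lemma abs_iteratedDeriv_three_cgf_le (h : IsCGF φ τ μ) {t : ℝ} (ht : |t| * τ < 1) :
    |iteratedDeriv 3 (cgf id μ) t| ≤ τ * Var[id; μ] := by
  have hdisc : IsOpen {z : ℂ | ‖z‖ * τ < 1} :=
    isOpen_lt (continuous_norm.mul continuous_const) continuous_const
  have hreal : IsOpen {t : ℝ | |t| * τ < 1} :=
    isOpen_lt (continuous_abs.mul continuous_const) continuous_const
  have heq : cgf id μ =ᶠ[𝓝 t] fun s : ℝ ↦ (φ s).re :=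
    eventually_of_mem (hreal.mem_nhds ht) fun s hs ↦ (h.re_eq_cgf hs).symm
  have ht' : (t : ℂ) ∈ {z : ℂ | ‖z‖ * τ < 1} := by simpa using ht
  rw [heq.iteratedDeriv_eq,
    iteratedDeriv_re_comp_ofReal hdisc (fun z hz ↦ (h.2 z hz).2.2.1) 3 ht']
  exact (Complex.abs_re_le_norm _).trans (h.2 t ht').2.2.2

lemma cgf_le [IsProbabilityMeasure μ] (h : IsCGF φ τ μ) (hc : ∫ x, x ∂μ = 0) {t : ℝ}
    (ht₀ : 0 ≤ t) (ht : t * τ < 1) :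
    cgf id μ t ≤ (Var[id; μ] + τ * Var[id; μ] * t) * t ^ 2 / 2 := by
  have hdisc : ∀ u ∈ Icc 0 t, |u| * τ < 1 := by
    rintro u ⟨hu₀, hut⟩
    rw [abs_of_nonneg hu₀]
    rcases le_total 0 τ with hτ | hτ <;> nlinarith
  exact cgf_le_of_abs_iteratedDeriv_three_le aemeasurable_id hc ht₀
    (fun u hu ↦ h.subset_interior_integrableExpSet (hdisc u hu))
    (fun u hu ↦ h.abs_iteratedDeriv_three_cgf_le (hdisc u hu))

lemma measureReal_ge_le [IsProbabilityMeasure μ] (h : IsCGF φ τ μ) (hc : ∫ x, x ∂μ = 0)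
    (x : ℝ) {t : ℝ} (ht₀ : 0 ≤ t) (ht : t * τ < 1) :
    μ.real {y | x ≤ y} ≤ rexp (-t * x + (Var[id; μ] + τ * Var[id; μ] * t) * t ^ 2 / 2) :=
  (measure_ge_le_exp_cgf (X := id) x ht₀
    (h.integrable_exp_mul (by rwa [abs_of_nonneg ht₀]))).trans
    (exp_le_exp.2 (by gcongr; exact h.cgf_le hc ht₀ ht))

end IsCGF

lemma bernstein_exponent_le_gaussian {τ v x : ℝ} (hτ : 0 < τ) (hx : 0 ≤ x) (h : τ * x ≤ v) :
    -(x / (2 * v)) * x + (v + τ * v * (x / (2 * v))) * (x / (2 * v)) ^ 2 / 2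
      ≤ -x ^ 2 / (4 * v) := by
  rcases (mul_nonneg hτ.le hx).trans h |>.eq_or_lt with hv | hv
  -- `v = 0` forces `x = 0`, and then both sides vanish because `x / 0 = 0`.
  · obtain rfl : x = 0 := by nlinarith
    simp
  rw [← sub_nonneg]
  have key : -x ^ 2 / (4 * v) - (-(x / (2 * v)) * x + (v + τ * v * (x / (2 * v)))
      * (x / (2 * v)) ^ 2 / 2) = x ^ 2 * (2 * v - τ * x) / (16 * v ^ 2) := by
    field_simp
    ring
  rw [key]
  apply div_nonneg _ (by positivity)
  nlinarith [sq_nonneg x]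

lemma bernstein_exponent_le_exponential {τ v x : ℝ} (hτ : 0 < τ) (hx : 0 ≤ x) (h : v < τ * x) :
    -(2 * τ)⁻¹ * x + (v + τ * v * (2 * τ)⁻¹) * (2 * τ)⁻¹ ^ 2 / 2 ≤ -x / (4 * τ) := by
  rw [← sub_nonneg]
  have key : -x / (4 * τ) - (-(2 * τ)⁻¹ * x + (v + τ * v * (2 * τ)⁻¹) * (2 * τ)⁻¹ ^ 2 / 2)
      = (4 * τ * x - 3 * v) / (16 * τ ^ 2) := by
    field_simp
    ring
  rw [key]
  apply div_nonneg _ (by positivity)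
  nlinarith

/-- Bernstein-type tail inequality for the class `A₁(τ)`:
`P(ξ ≥ x) ≤ max{exp(-x²/(4σ²)), exp(-x/(4τ))}` for `x ≥ 0`. -/
theorem bernstein_tail_A1
    (τ σ : ℝ) (hτ : 0 < τ) (F : Measure ℝ) [IsProbabilityMeasure F]
    (hmean : (∫ x : ℝ, x ∂F) = 0) (hvar : variance id F = σ ^ 2) (hA : MemA1 τ F)
    (x : ℝ) (hx : 0 ≤ x) :
    (F {y : ℝ | x ≤ y}).toReal ≤
      max (Real.exp (-(x ^ 2) / (4 * σ ^ 2))) (Real.exp (-x / (4 * τ))) := by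
  obtain ⟨φ, hφ⟩ := hA
  have chernoff : ∀ t, 0 ≤ t → t * τ < 1 →
      (F {y : ℝ | x ≤ y}).toReal ≤ rexp (-t * x + (σ ^ 2 + τ * σ ^ 2 * t) * t ^ 2 / 2) := by
    intro t ht₀ ht
    rw [← hvar]
    exact hφ.measureReal_ge_le hmean x ht₀ ht
  rcases le_or_gt (τ * x) (σ ^ 2) with h | h
  · have ht : x / (2 * σ ^ 2) * τ < 1 := by
      have : τ * x / (2 * σ ^ 2) ≤ 2⁻¹ :=
        div_le_of_le_mul₀ (by positivity) (by norm_num) (by linarith)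
      rw [div_mul_eq_mul_div, mul_comm]
      linarith
    exact le_max_of_le_left ((chernoff _ (by positivity) ht).trans
      (exp_le_exp.2 (bernstein_exponent_le_gaussian hτ hx h)))
  · have ht : (2 * τ)⁻¹ * τ < 1 := by
      rw [mul_comm, ← div_eq_mul_inv, div_lt_one (by positivity)]
      linarith
    exact le_max_of_le_right ((chernoff _ (by positivity) ht).trans
      (exp_le_exp.2 (bernstein_exponent_le_exponential hτ hx h)))
end
end

section
/- Let τ > 0 and let ξ₁ and ξ₂ be independent real random variables whose distributions F₁ and F₂ both belong to the class A₁(τ). Then the distribution of ξ₁ + ξ₂, i.e. the convolution F₁ * F₂, also belongs to the class A₁(τ). -/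
open MeasureTheory ProbabilityTheory

noncomputable section

/-! The Laplace transform of `μ ∗ ν` is the product of those of `μ` and `ν`, so `φ_μ + φ_ν` is a
cumulant generating function of `μ ∗ ν`. Third derivatives add, and so do variances (which are
finite because exponential moments exist near `0`), hence the bound `τ · Var` is preserved. -/

namespace ProbabilityTheory

variable {μ ν : Measure ℝ}

lemma integrable_cexp_mul_conv {z : ℂ}
    (hμ : Integrable (fun x : ℝ => Complex.exp (z * x)) μ)
    (hν : Integrable (fun x : ℝ => Complex.exp (z * x)) ν) :
    Integrable (fun x : ℝ => Complex.exp (z * x)) (μ ∗ ν) := by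
  rw [Measure.conv, integrable_map_measure (by fun_prop) (by fun_prop)]
  simpa [Function.comp_def, mul_add, Complex.exp_add] using hμ.mul_prod hν

lemma complexMGF_id_conv [SFinite μ] [SFinite ν] (z : ℂ) :
    complexMGF id (μ ∗ ν) z = complexMGF id μ z * complexMGF id ν z := by
  rw [complexMGF, Measure.conv, integral_map (by fun_prop) (by fun_prop)]
  simp only [id, Complex.ofReal_add, mul_add, Complex.exp_add]
  exact integral_prod_mul (fun x : ℝ => Complex.exp (z * x)) (fun y : ℝ => Complex.exp (z * y))

lemma variance_id_conv [IsProbabilityMeasure μ] [IsProbabilityMeasure ν]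
    (hμ : MemLp id 2 μ) (hν : MemLp id 2 ν) :
    Var[id; μ ∗ ν] = Var[id; μ] + Var[id; ν] := by
  rw [Measure.conv, variance_map (by fun_prop) (by fun_prop)]
  exact variance_add_prod (X := id) (Y := id) hμ hν

end ProbabilityTheory

lemma IsCGF.memLp_id {φ : ℂ → ℂ} {τ : ℝ} {μ : Measure ℝ} (h : IsCGF φ τ μ) : MemLp id 2 μ := by
  refine memLp_of_mem_interior_integrableExpSet (mem_interior_iff_mem_nhds.2 ?_) 2
  have hopen : IsOpen {t : ℝ | |t| * τ < 1} := isOpen_lt (by fun_prop) continuous_const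
  refine Filter.mem_of_superset (hopen.mem_nhds (by simp)) fun t ht => ?_
  simpa [integrableExpSet, Complex.norm_exp] using (h.2 t (by simpa using ht)).1.norm

theorem MemA1.conv {τ : ℝ} {μ ν : Measure ℝ} [IsProbabilityMeasure μ] [IsProbabilityMeasure ν]
    (hμ : MemA1 τ μ) (hν : MemA1 τ ν) : MemA1 τ (μ ∗ ν) := by
  obtain ⟨φ, hφ⟩ := hμ
  obtain ⟨ψ, hψ⟩ := hν
  have hVar := variance_id_conv hφ.memLp_id hψ.memLp_id
  refine ⟨φ + ψ, by simp [hφ.1, hψ.1], fun z hz => ?_⟩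
  obtain ⟨hiφ, heφ, haφ, hdφ⟩ := hφ.2 z hz
  obtain ⟨hiψ, heψ, haψ, hdψ⟩ := hψ.2 z hz
  refine ⟨integrable_cexp_mul_conv hiφ hiψ, ?_, haφ.add haψ, ?_⟩
  · calc Complex.exp ((φ + ψ) z) = Complex.exp (φ z) * Complex.exp (ψ z) := Complex.exp_add _ _
      _ = complexMGF id (μ ∗ ν) z := by rw [heφ, heψ, complexMGF_id_conv]; rfl
  · rw [iteratedDeriv_add haφ.contDiffAt haψ.contDiffAt, hVar, mul_add]
    exact (norm_add_le _ _).trans (add_le_add hdφ hdψ)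

theorem memA1_convolution_general
    (τ : ℝ)
    (Ω : Type) [MeasurableSpace Ω] (P : Measure Ω) [IsProbabilityMeasure P]
    (ξ₁ ξ₂ : Ω → ℝ) (h₁ : Measurable ξ₁) (h₂ : Measurable ξ₂)
    (hindep : IndepFun ξ₁ ξ₂ P)
    (hA1 : MemA1 τ (P.map ξ₁)) (hA2 : MemA1 τ (P.map ξ₂)) :
    MemA1 τ (P.map (fun ω => ξ₁ ω + ξ₂ ω)) := by
  have := Measure.isProbabilityMeasure_map (μ := P) h₁.aemeasurable
  have := Measure.isProbabilityMeasure_map (μ := P) h₂.aemeasurable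
  rw [show (fun ω => ξ₁ ω + ξ₂ ω) = ξ₁ + ξ₂ from rfl, hindep.map_add_eq_map_conv_map h₁ h₂]
  exact hA1.conv hA2

/-- The class `A₁(τ)` is closed under convolution: if independent random variables `ξ₁, ξ₂`
have distributions in `A₁(τ)`, then the distribution of `ξ₁ + ξ₂` is in `A₁(τ)`. -/
theorem memA1_convolution
    (τ : ℝ) (hτ : 0 < τ)
    (Ω : Type) [MeasurableSpace Ω] (P : Measure Ω) [IsProbabilityMeasure P]
    (ξ₁ ξ₂ : Ω → ℝ) (h₁ : Measurable ξ₁) (h₂ : Measurable ξ₂)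
    (hindep : IndepFun ξ₁ ξ₂ P)
    (hA1 : MemA1 τ (P.map ξ₁)) (hA2 : MemA1 τ (P.map ξ₂)) :
    MemA1 τ (P.map (fun ω => ξ₁ ω + ξ₂ ω)) :=
  memA1_convolution_general τ Ω P ξ₁ ξ₂ h₁ h₂ hindep hA1 hA2
end
end
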